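/- Let 𝒞 be a root class of groups consisting only of periodic groups and let n ∈ ℤ∖{0}. Then the following are equivalent: (1) BS(1,n) is conjugacy 𝒞-separable; (2) BS(1,n) is conjugacy 𝓕_{𝔓(𝒞)}-separable; (3) BS(1,n) is conjugacy 𝓕𝓢_{𝔓(𝒞)}-separable. -/

import Mathlib

/-- The Baumslag–Solitar relations for `BS(m,n)`: one relation `t⁻¹ aᵐ t a⁻ⁿ`. -/
def BSrels (m n : ℤ) : Set (FreeGroup Bool) :=
  {(FreeGroup.of true)⁻¹ * (FreeGroup.of false) ^ m * FreeGroup.of true *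
    (FreeGroup.of false) ^ (-n)}

/-- The Baumslag–Solitar group `BS(m,n) = ⟨a, t ∣ t⁻¹ aᵐ t = aⁿ⟩`. -/
def BS (m n : ℤ) : Type := PresentedGroup (BSrels m n)

instance (m n : ℤ) : Group (BS m n) :=
  inferInstanceAs (Group (PresentedGroup (BSrels m n)))

/-- The generator `a` of `BS(m,n)`. -/
def BSa (m n : ℤ) : BS m n := PresentedGroup.of false

/-- The generator `t` of `BS(m,n)`. -/
def BSt (m n : ℤ) : BS m n := PresentedGroup.of true

/-- The relations of `H(n,r,s)`: `t⁻¹ a t a⁻ⁿ`, `tʳ`, `aˢ`. -/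
def Hrels (n r s : ℤ) : Set (FreeGroup Bool) :=
  {(FreeGroup.of true)⁻¹ * FreeGroup.of false * FreeGroup.of true * (FreeGroup.of false) ^ (-n),
   (FreeGroup.of true) ^ r, (FreeGroup.of false) ^ s}

/-- The group `H(n,r,s) = ⟨a, t ∣ t⁻¹ a t = aⁿ, tʳ = 1, aˢ = 1⟩`. -/
def Hgrp (n r s : ℤ) : Type := PresentedGroup (Hrels n r s)

instance (n r s : ℤ) : Group (Hgrp n r s) :=
  inferInstanceAs (Group (PresentedGroup (Hrels n r s)))

/-- The generator `a` of `H(n,r,s)`. -/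
def Ha (n r s : ℤ) : Hgrp n r s := PresentedGroup.of false

/-- The generator `t` of `H(n,r,s)`. -/
def Ht (n r s : ℤ) : Hgrp n r s := PresentedGroup.of true

/-- A class of groups: a predicate on (Type-0) groups. -/
def GroupClass : Type 1 := ∀ (G : Type) [Group G], Prop

/-- A class of groups consists only of periodic (torsion) groups. -/
def PeriodicClass (C : GroupClass) : Prop :=
  ∀ (G : Type) [Group G], C G → ∀ g : G, IsOfFinOrder g

/-- `C` is a root class: closed under isomorphism, contains a non-trivial group, closed under
subgroups, extensions and unrestricted direct products `∏_{y ∈ Y} X` with `X, Y ∈ C`. -/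
structure IsRootClass (C : GroupClass) : Prop where
  iso_closed : ∀ (G H : Type) [Group G] [Group H], (G ≃* H) → C G → C H
  has_nontrivial : ∃ (G : Type) (_ : Group G), C G ∧ Nontrivial G
  subgroup_closed : ∀ (G : Type) [Group G] (H : Subgroup G), C G → C H
  extension_closed : ∀ (G : Type) [Group G] (N : Subgroup G) [N.Normal],
    C N → C (G ⧸ N) → C G
  pi_closed : ∀ (X Y : Type) [Group X] [Group Y], C X → C Y → C (Y → X)

/-- `𝔓(C)`: the set of primes dividing the order of some element of some group in `C`. -/
def PrimesOf (C : GroupClass) : Set ℕ :=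
  {p | p.Prime ∧ ∃ (G : Type) (_ : Group G), C G ∧ ∃ g : G, p ∣ orderOf g}

/-- A natural number is a `P`-number: all its prime divisors lie in `P`. -/
def IsPNat (P : Set ℕ) (k : ℕ) : Prop := ∀ p : ℕ, p.Prime → p ∣ k → p ∈ P

/-- An integer is a `P`-number: all its prime divisors lie in `P`. -/
def IsPInt (P : Set ℕ) (k : ℤ) : Prop := ∀ p : ℕ, p.Prime → (p : ℤ) ∣ k → p ∈ P

/-- The class `𝓕_P` of finite groups whose order is a `P`-number. -/
def FClass (P : Set ℕ) (G : Type) [Group G] : Prop :=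
  Finite G ∧ IsPNat P (Nat.card G)

/-- The class `𝓕𝓢_P` of finite solvable groups whose order is a `P`-number. -/
def FSClass (P : Set ℕ) (G : Type) [Group G] : Prop :=
  Finite G ∧ IsSolvable G ∧ IsPNat P (Nat.card G)

/-- `X` is conjugacy `C`-separable. -/
def ConjSep (C : GroupClass) (X : Type) [Group X] : Prop :=
  ∀ x y : X, ¬IsConj x y →
    ∃ (G : Type) (_ : Group G), C G ∧
      ∃ σ : X →* G, Function.Surjective σ ∧ ¬IsConj (σ x) (σ y)

/-- `X` is residually a `C`-group. -/
def ResiduallyIn (C : GroupClass) (X : Type) [Group X] : Prop :=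
  ∀ x y : X, x ≠ y →
    ∃ (G : Type) (_ : Group G), C G ∧
      ∃ σ : X →* G, Function.Surjective σ ∧ σ x ≠ σ y

/-- `X` is residually finite. -/
def ResiduallyFinite (X : Type) [Group X] : Prop :=
  ∀ x y : X, x ≠ y →
    ∃ (G : Type) (_ : Group G), Finite G ∧
      ∃ σ : X →* G, Function.Surjective σ ∧ σ x ≠ σ y

/-- `X` is conjugacy (finite) separable. -/
def ConjugacySeparable (X : Type) [Group X] : Prop :=
  ∀ x y : X, ¬IsConj x y →
    ∃ (G : Type) (_ : Group G), Finite G ∧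
      ∃ σ : X →* G, Function.Surjective σ ∧ ¬IsConj (σ x) (σ y)

/-- `Ξ(n,P)`: positive `P`-numbers `s` such that `n ^ r ≡ 1 (mod s)` for some positive
`P`-number `r`. -/
def Xi (n : ℤ) (P : Set ℕ) : Set ℤ :=
  {s | 0 < s ∧ IsPInt P s ∧ ∃ r : ℤ, 0 < r ∧ IsPInt P r ∧ n ^ r.toNat ≡ 1 [ZMOD s]}

/-- `Ω(n,P)`: pairs `(r,s)` of positive `P`-numbers with `n ^ r ≡ 1 (mod s)`. -/
def OmegaP (n : ℤ) (P : Set ℕ) : Set (ℤ × ℤ) :=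
  {rs | 0 < rs.1 ∧ 0 < rs.2 ∧ IsPInt P rs.1 ∧ IsPInt P rs.2 ∧
    n ^ rs.1.toNat ≡ 1 [ZMOD rs.2]}


section Aux

lemma BS_rel (n : ℤ) : (BSt 1 n)⁻¹ * BSa 1 n * BSt 1 n = (BSa 1 n) ^ n := by
  have hmem : ((FreeGroup.of true)⁻¹ * (FreeGroup.of false) ^ (1 : ℤ) * FreeGroup.of true *
      (FreeGroup.of false) ^ (-n)) ∈ Subgroup.normalClosure (BSrels 1 n) :=
    Subgroup.subset_normalClosure (by rw [BSrels]; exact Set.mem_singleton _)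
  have h : PresentedGroup.mk (BSrels 1 n) ((FreeGroup.of true)⁻¹ *
      (FreeGroup.of false) ^ (1 : ℤ) * FreeGroup.of true * (FreeGroup.of false) ^ (-n)) = 1 :=
    (QuotientGroup.eq_one_iff _).mpr hmem
  rw [map_mul, map_mul, map_mul, map_inv, map_zpow, map_zpow, zpow_one, zpow_neg,
    mul_inv_eq_one] at h
  exact h

lemma BS_generated_by {m n : ℤ} (H : Subgroup (BS m n))
    (ha : BSa m n ∈ H) (ht : BSt m n ∈ H) (x : BS m n) : x ∈ H := by
  refine PresentedGroup.generated_by _ H ?_ x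
  intro j
  cases j
  · exact ha
  · exact ht

lemma conj_zpow_eq {G : Type*} [Group G] (g x : G) (m : ℤ) :
    g⁻¹ * x ^ m * g = (g⁻¹ * x * g) ^ m := by
  have h := map_zpow (MulAut.conj g⁻¹) x m
  simp only [MulAut.conj_apply, inv_inv] at h
  exact h

lemma quotient_lemma {n : ℤ} {G : Type} [Group G] (σ : BS 1 n →* G)
    (hσ : Function.Surjective σ) (ha : IsOfFinOrder (σ (BSa 1 n)))
    (ht : IsOfFinOrder (σ (BSt 1 n))) : Finite G ∧ IsSolvable G := by
  set α := σ (BSa 1 n) with hα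
  set τ := σ (BSt 1 n) with hτ
  have rel : τ⁻¹ * α * τ = α ^ n := by
    have h := congrArg σ (BS_rel n)
    simpa only [map_mul, map_inv, map_zpow] using h
  have key : ∀ k : ℕ, (τ ^ k)⁻¹ * α * τ ^ k = α ^ ((n : ℤ) ^ k) := by
    intro k
    induction k with
    | zero => simp
    | succ k ih =>
      have : (τ ^ (k + 1))⁻¹ * α * τ ^ (k + 1) = τ⁻¹ * ((τ ^ k)⁻¹ * α * τ ^ k) * τ := by
        rw [pow_succ]; group
      rw [this, ih, conj_zpow_eq, rel, ← zpow_mul, ← pow_succ']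
  set r := orderOf τ with hr
  have hr0 : 0 < r := ht.orderOf_pos
  have hτr : τ ^ r = 1 := pow_orderOf_eq_one τ
  have hτinv : τ⁻¹ = τ ^ (r - 1) := by
    rw [inv_eq_iff_mul_eq_one, ← pow_succ', Nat.sub_add_cancel hr0, hτr]
  have key2 : τ * α * τ⁻¹ = α ^ ((n : ℤ) ^ (r - 1)) := by
    have h := key (r - 1)
    rw [← hτinv] at h
    rw [inv_inv] at h
    exact h
  set N := Subgroup.zpowers α with hN
  have hnorm : ∀ g : G, g ∈ Subgroup.normalizer (N : Set G) := by
    intro g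
    obtain ⟨x, rfl⟩ := hσ g
    have hx : x ∈ Subgroup.comap σ (Subgroup.normalizer (N : Set G)) := by
      refine BS_generated_by _ ?_ ?_ x
      · exact Subgroup.le_normalizer (Subgroup.mem_zpowers α)
      · have hc : ∀ (g x : G) (m : ℤ), g * x ^ m * g⁻¹ = (g * x * g⁻¹) ^ m := by
          intro g x m
          have h := conj_zpow_eq g⁻¹ x m
          rw [inv_inv] at h
          exact h
        refine Subgroup.mem_comap.mpr (Subgroup.mem_normalizer_iff.mpr ?_)
        intro h
        constructor
        · intro hmem
          obtain ⟨k, hk⟩ := Subgroup.mem_zpowers_iff.mp hmem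
          exact Subgroup.mem_zpowers_iff.mpr
            ⟨(n : ℤ) ^ (r - 1) * k, by rw [zpow_mul, ← key2, ← hc, hk]⟩
        · intro hmem
          obtain ⟨k, hk⟩ := Subgroup.mem_zpowers_iff.mp hmem
          have h2 : h = τ⁻¹ * α ^ k * τ := by rw [hk, ← hτ]; group
          refine Subgroup.mem_zpowers_iff.mpr ⟨n * k, ?_⟩
          rw [zpow_mul, ← rel, ← conj_zpow_eq]
          exact h2.symm
    exact hx
  have hNnormal : N.Normal := Subgroup.normalizer_eq_top_iff.mp (top_unique fun g _ => hnorm g)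
  haveI := hNnormal
  have hNfin : Finite N := ha.finite_zpowers.to_subtype
  haveI := hNfin
  set π := QuotientGroup.mk' N with hπ
  have hπα : π α = 1 := (QuotientGroup.eq_one_iff α).mpr (Subgroup.mem_zpowers α)
  have htop : ∀ q : G ⧸ N, q ∈ Subgroup.zpowers (π τ) := by
    intro q
    obtain ⟨g, rfl⟩ := QuotientGroup.mk'_surjective N q
    obtain ⟨x, rfl⟩ := hσ g
    have hx : x ∈ Subgroup.comap (π.comp σ) (Subgroup.zpowers (π τ)) := by
      refine BS_generated_by _ ?_ ?_ x
      · refine Subgroup.mem_comap.mpr ?_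
        show π α ∈ _
        rw [hπα]; exact one_mem _
      · exact Subgroup.mem_comap.mpr (Subgroup.mem_zpowers _)
    exact hx
  have hπτ : IsOfFinOrder (π τ) := π.isOfFinOrder ht
  have hfinQ : Finite (G ⧸ N) := by
    have hfin : (Subgroup.zpowers (π τ) : Set (G ⧸ N)).Finite := hπτ.finite_zpowers
    have : (Set.univ : Set (G ⧸ N)).Finite := hfin.subset fun q _ => htop q
    exact Set.finite_univ_iff.mp this
  haveI := hfinQ
  have hfinG : Finite G := Finite.of_equiv _ (Subgroup.groupEquivQuotientProdSubgroup (s := N)).symm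
  refine ⟨hfinG, ?_⟩
  haveI hsolN : Group.IsSolvable N := by
    apply isSolvable_of_comm
    rintro ⟨x, i, rfl⟩ ⟨y, j, rfl⟩
    ext
    exact zpow_mul_comm α i j
  haveI hsolQ : Group.IsSolvable (G ⧸ N) := by
    apply isSolvable_of_comm
    intro x y
    obtain ⟨i, rfl⟩ := htop x
    obtain ⟨j, rfl⟩ := htop y
    exact zpow_mul_comm (π τ) i j
  exact solvable_of_ker_le_range N.subtype π
    (by rw [QuotientGroup.ker_mk', Subgroup.range_subtype])

variable {C : GroupClass}

lemma triv_in_C (hroot : IsRootClass C) (G : Type) [Group G] (hG : Subsingleton G) : C G := by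
  obtain ⟨X, instX, hX, hnt⟩ := hroot.has_nontrivial
  have hB : C (⊥ : Subgroup X) := hroot.subgroup_closed X ⊥ hX
  haveI : Subsingleton ((⊥ : Subgroup X) : Type) := by
    constructor
    rintro ⟨a, ha⟩ ⟨b, hb⟩
    simp only [Subgroup.mem_bot] at ha hb
    simp [ha, hb]
  refine hroot.iso_closed _ G ?_ hB
  exact { toFun := fun _ => 1, invFun := fun _ => 1,
          left_inv := fun x => Subsingleton.elim _ _,
          right_inv := fun x => Subsingleton.elim _ _,
          map_mul' := fun _ _ => Subsingleton.elim _ _ }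

lemma prime_cyclic_in_C (hroot : IsRootClass C) (hper : PeriodicClass C) {p : ℕ}
    (hp : p ∈ PrimesOf C) (G : Type) [Group G] (hcard : Nat.card G = p) : C G := by
  obtain ⟨pp, X, instX, hX, g, hdvd⟩ := hp
  haveI := Fact.mk pp
  have hg0 : orderOf g ≠ 0 := (hper X hX g).orderOf_pos.ne'
  set h := g ^ (orderOf g / p) with hh
  have hoh : orderOf h = p := orderOf_pow_orderOf_div hg0 hdvd
  have hS : C (Subgroup.zpowers h) := hroot.subgroup_closed X _ hX
  have hcardS : Nat.card (Subgroup.zpowers h) = p := by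
    rw [Nat.card_zpowers, hoh]
  exact hroot.iso_closed _ G (mulEquivOfPrimeCardEq hcardS hcard) hS

lemma abelian_in_C (hroot : IsRootClass C) (hper : PeriodicClass C) :
    ∀ (k : ℕ) (G : Type) [Group G], Finite G → Nat.card G = k →
    (∀ x y : G, x * y = y * x) → IsPNat (PrimesOf C) (Nat.card G) → C G := by
  intro k
  induction k using Nat.strong_induction_on with
  | _ k ih =>
    intro G _ hfin hcard hcomm hP
    rcases subsingleton_or_nontrivial G with hs | hnt
    · exact triv_in_C hroot G hs
    · have h1 : 1 < Nat.card G := Finite.one_lt_card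
      obtain ⟨p, pp, pdvd⟩ := Nat.exists_prime_and_dvd (n := Nat.card G) (by omega)
      haveI := Fact.mk pp
      obtain ⟨g, hg⟩ := exists_prime_orderOf_dvd_card' p pdvd
      set N := Subgroup.zpowers g with hN
      haveI hNn : N.Normal := by
        constructor
        intro a ha x
        have : x * a * x⁻¹ = a := by rw [hcomm x a, mul_assoc, mul_inv_cancel, mul_one]
        rwa [this]
      have hpP : p ∈ PrimesOf C := hP p pp pdvd
      have hCN : C N := prime_cyclic_in_C hroot hper hpP _ (by rw [Nat.card_zpowers, hg])
      have hcardeq : Nat.card G = Nat.card (G ⧸ N) * Nat.card N :=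
        Subgroup.card_eq_card_quotient_mul_card_subgroup N
      have hcN : Nat.card N = p := by rw [Nat.card_zpowers, hg]
      have hqlt : Nat.card (G ⧸ N) < k := by
        rw [← hcard]
        have h2 : 1 < Nat.card N := by rw [hcN]; exact pp.one_lt
        have h3 : 0 < Nat.card (G ⧸ N) := Nat.card_pos
        calc Nat.card (G ⧸ N) < Nat.card (G ⧸ N) * Nat.card N :=
              lt_mul_of_one_lt_right h3 h2
          _ = Nat.card G := hcardeq.symm
      have hqdvd : Nat.card (G ⧸ N) ∣ Nat.card G := ⟨Nat.card N, hcardeq⟩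
      have hCQ : C (G ⧸ N) := by
        refine ih _ hqlt (G ⧸ N) inferInstance rfl ?_ ?_
        · intro x y
          obtain ⟨a, rfl⟩ := QuotientGroup.mk_surjective x
          obtain ⟨b, rfl⟩ := QuotientGroup.mk_surjective y
          rw [← QuotientGroup.mk_mul, ← QuotientGroup.mk_mul, hcomm]
        · intro q qq qdvd
          exact hP q qq (qdvd.trans hqdvd)
      exact hroot.extension_closed G N hCN hCQ

lemma solvable_in_C (hroot : IsRootClass C) (hper : PeriodicClass C) :
    ∀ (k : ℕ) (G : Type) [Group G], Finite G → Nat.card G = k →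
    IsSolvable G → IsPNat (PrimesOf C) (Nat.card G) → C G := by
  intro k
  induction k using Nat.strong_induction_on with
  | _ k ih =>
    intro G _ hfin hcard hsol hP
    rcases subsingleton_or_nontrivial G with hs | hnt
    · exact triv_in_C hroot G hs
    · set N := commutator G with hN
      have hNne : N ≠ ⊤ := by
        intro htop
        have hall : ∀ m : ℕ, derivedSeries G m = ⊤ := by
          intro m
          induction m with
          | zero => exact derivedSeries_zero G
          | succ m ihm =>
            rw [derivedSeries_succ, ihm, ← commutator_def]
            exact htop
        obtain ⟨m, hm⟩ := hsol
        have : (⊤ : Subgroup G) = ⊥ := by rw [← hall m, hm]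
        obtain ⟨x, y, hxy⟩ := hnt
        apply hxy
        have hx : x ∈ (⊥ : Subgroup G) := this ▸ Subgroup.mem_top x
        have hy : y ∈ (⊥ : Subgroup G) := this ▸ Subgroup.mem_top y
        rw [Subgroup.mem_bot] at hx hy
        rw [hx, hy]
      have hNdvd : Nat.card N ∣ Nat.card G := Subgroup.card_subgroup_dvd_card N
      have hNlt : Nat.card N < k := by
        rw [← hcard]
        refine lt_of_le_of_ne (Nat.le_of_dvd Nat.card_pos hNdvd) ?_
        intro heq
        exact hNne (Subgroup.eq_top_of_card_eq N heq)
      haveI : N.Normal := by rw [hN]; infer_instance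
      have hCN : C N := by
        refine ih _ hNlt N inferInstance rfl (by haveI : Group.IsSolvable G := hsol; exact (inferInstance : Group.IsSolvable N)) ?_
        intro q qq qdvd
        exact hP q qq (qdvd.trans hNdvd)
      have hqdvd : Nat.card (G ⧸ N) ∣ Nat.card G :=
        ⟨Nat.card N, Subgroup.card_eq_card_quotient_mul_card_subgroup N⟩
      have hCQ : C (G ⧸ N) := by
        refine abelian_in_C hroot hper (Nat.card (G ⧸ N)) (G ⧸ N) inferInstance rfl ?_ ?_
        · intro x y
          obtain ⟨a, rfl⟩ := QuotientGroup.mk_surjective x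
          obtain ⟨b, rfl⟩ := QuotientGroup.mk_surjective y
          rw [← QuotientGroup.mk_mul, ← QuotientGroup.mk_mul]
          have hmem : (a * b)⁻¹ * (b * a) ∈ commutator G := by
            open scoped commutatorElement in
            have he : (a * b)⁻¹ * (b * a) = ⁅b⁻¹, a⁻¹⁆ := by group
            rw [he, commutator_def]
            exact Subgroup.commutator_mem_commutator (Subgroup.mem_top _) (Subgroup.mem_top _)
          exact QuotientGroup.eq.mpr hmem
        · intro q qq qdvd
          exact hP q qq (qdvd.trans hqdvd)
      exact hroot.extension_closed G N hCN hCQ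

end Aux

/-- equivalence of conjugacy `𝒞`-, `𝓕_{𝔓(𝒞)}`- and `𝓕𝓢_{𝔓(𝒞)}`-separability
for `BS(1,n)`. -/
theorem stmt14 (C : GroupClass) (hroot : IsRootClass C) (hper : PeriodicClass C)
    (n : ℤ) (hn : n ≠ 0) :
    (ConjSep C (BS 1 n) ↔ ConjSep (FClass (PrimesOf C)) (BS 1 n)) ∧
    (ConjSep (FClass (PrimesOf C)) (BS 1 n) ↔
      ConjSep (FSClass (PrimesOf C)) (BS 1 n)) := by
  set P := PrimesOf C with hP
  -- every finite solvable P-group lies in C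
  have hFS_sub_C : ∀ (G : Type) [Group G], FSClass P G → C G := by
    intro G _ hG
    obtain ⟨hfin, hsol, hPn⟩ := hG
    exact solvable_in_C hroot hper (Nat.card G) G hfin rfl hsol hPn
  -- every surjective image of BS(1,n) lying in C is a finite solvable P-group
  have hCquot : ∀ (G : Type) [inst : Group G], C G →
      ∀ σ : BS 1 n →* G, Function.Surjective σ → FSClass P G := by
    intro G inst hG σ hs
    obtain ⟨hfin, hsol⟩ := quotient_lemma σ hs (hper G hG _) (hper G hG _)
    refine ⟨hfin, hsol, ?_⟩
    intro p pp pdvd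
    haveI := hfin
    haveI := Fact.mk pp
    obtain ⟨g, hg⟩ := exists_prime_orderOf_dvd_card' p pdvd
    exact ⟨pp, G, inst, hG, g, hg ▸ dvd_refl p⟩
  -- every finite surjective image of BS(1,n) is solvable
  have hFquot : ∀ (G : Type) [inst : Group G], FClass P G →
      ∀ σ : BS 1 n →* G, Function.Surjective σ → FSClass P G := by
    intro G inst hG σ hs
    obtain ⟨hfin, hPn⟩ := hG
    haveI := hfin
    obtain ⟨-, hsol⟩ := quotient_lemma σ hs (isOfFinOrder_of_finite _) (isOfFinOrder_of_finite _)
    exact ⟨hfin, hsol, hPn⟩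
  have h1 : ConjSep (FSClass P) (BS 1 n) → ConjSep C (BS 1 n) := by
    intro h x y hxy
    obtain ⟨G, inst, hG, σ, hs, hc⟩ := h x y hxy
    exact ⟨G, inst, hFS_sub_C G hG, σ, hs, hc⟩
  have h2 : ConjSep C (BS 1 n) → ConjSep (FSClass P) (BS 1 n) := by
    intro h x y hxy
    obtain ⟨G, inst, hG, σ, hs, hc⟩ := h x y hxy
    exact ⟨G, inst, hCquot G hG σ hs, σ, hs, hc⟩
  have h3 : ConjSep (FSClass P) (BS 1 n) → ConjSep (FClass P) (BS 1 n) := by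
    intro h x y hxy
    obtain ⟨G, inst, ⟨hfin, _, hPn⟩, σ, hs, hc⟩ := h x y hxy
    exact ⟨G, inst, ⟨hfin, hPn⟩, σ, hs, hc⟩
  have h4 : ConjSep (FClass P) (BS 1 n) → ConjSep (FSClass P) (BS 1 n) := by
    intro h x y hxy
    obtain ⟨G, inst, hG, σ, hs, hc⟩ := h x y hxy
    exact ⟨G, inst, hFquot G hG σ hs, σ, hs, hc⟩
  exact ⟨⟨fun h => h3 (h2 h), fun h => h1 (h4 h)⟩, ⟨h4, h3⟩⟩
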